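/- Let Ω be a bounded complete Reinhardt domain in ℂⁿ and let φ ∈ L^∞(Ω) be a quasi-homogeneous function of multidegree J ∈ ℤⁿ, written φ = ϕ e^{iJ·θ} with ϕ multi-radial. Then H*_φ H_φ is diagonal with respect to the orthonormal basis {e_α}_{α∈ℕ₀ⁿ}, and ⟨H*_φ H_φ e_α, e_α⟩ = λ''_α if α+J ∉ ℕ₀ⁿ and ⟨H*_φ H_φ e_α, e_α⟩ = λ''_α − |λ'_α|² if α+J ∈ ℕ₀ⁿ, where λ''_α = ∫_Ω |ϕ(z)|² |e_α(z)|² dV(z) and λ'_α = ∫_Ω ϕ(z) |e_α(z)| |e_{α+J}(z)| dV(z). -/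

import Mathlib

/-!
The torus `𝕋ⁿ` acts on the Reinhardt domain `Ω` by volume-preserving maps, so an integrand
transforming under it by a nontrivial character `ξ ↦ ξ^K` integrates to zero. Since `φ e_α`
has multidegree `J + α` and `e_β` has multidegree `β`, this gives `⟨φ e_α, φ e_β⟩ = 0` for
`α ≠ β` and `⟨φ e_α, e_β⟩ = 0` unless `β = α + J`; hence `P(φ e_α) = λ'_α e_{α+J}`, with
`λ'_α = 0` when `α + J ∉ ℕ₀ⁿ`. As `H_φ = (I - P) M_φ`,
`⟨H*_φ H_φ e_α, e_β⟩ = ⟨φ e_α, φ e_β⟩ - ⟨P(φ e_α), P(φ e_β)⟩`, and the surviving integrals are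
computed in polar coordinates, where `e^{iJ·θ}` cancels the phases of `z^α` and `z̄^{α+J}`.
-/

open MeasureTheory Complex Filter Topology Metric

noncomputable section

/-- `ℂⁿ`. -/
abbrev Cn (n : ℕ) := Fin n → ℂ

/-- The coordinatewise (torus/polydisc) action `ξ ⋄ z`. -/
def torusSMul {n : ℕ} (ξ z : Cn n) : Cn n := fun i => ξ i * z i

/-- The unit torus `𝕋ⁿ`. -/
def unitTorus (n : ℕ) : Set (Cn n) := {ξ | ∀ i, ‖ξ i‖ = 1}

/-- A set `Ω ⊆ ℂⁿ` is Reinhardt if `ξ ⋄ z ∈ Ω` whenever `z ∈ Ω` and `ξ ∈ 𝕋ⁿ`. -/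
def IsReinhardt {n : ℕ} (Ω : Set (Cn n)) : Prop :=
  ∀ z ∈ Ω, ∀ ξ ∈ unitTorus n, torusSMul ξ z ∈ Ω

/-- A set `Ω ⊆ ℂⁿ` is complete Reinhardt if `λ ⋄ z ∈ Ω` whenever `z ∈ Ω` and `λ ∈ 𝔻ⁿ`. -/
def IsCompleteReinhardt {n : ℕ} (Ω : Set (Cn n)) : Prop :=
  ∀ z ∈ Ω, ∀ l : Cn n, (∀ i, ‖l i‖ < 1) → torusSMul l z ∈ Ω

/-- Lebesgue measure restricted to `Ω`. -/
abbrev restVol {n : ℕ} (Ω : Set (Cn n)) : Measure (Cn n) := volume.restrict Ω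

/-- The subspace of `L²(Ω)` of functions having a holomorphic representative on `Ω`. -/
def holoSub {n : ℕ} (Ω : Set (Cn n)) : Submodule ℂ (Lp ℂ 2 (restVol Ω)) where
  carrier := {f | ∃ g : Cn n → ℂ, DifferentiableOn ℂ g Ω ∧ ∀ᵐ z ∂(restVol Ω), f z = g z}
  add_mem' := by
    rintro f g ⟨gf, hgf, hf⟩ ⟨gg, hgg, hg⟩
    refine ⟨gf + gg, hgf.add hgg, ?_⟩
    filter_upwards [hf, hg, Lp.coeFn_add f g] with z h1 h2 h3
    rw [h3, Pi.add_apply, h1, h2]; rfl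
  zero_mem' := by
    refine ⟨0, differentiableOn_const 0, ?_⟩
    filter_upwards [Lp.coeFn_zero ℂ 2 (restVol _)] with z hz
    simpa using hz
  smul_mem' := by
    rintro c f ⟨gf, hgf, hf⟩
    refine ⟨c • gf, hgf.const_smul c, ?_⟩
    filter_upwards [hf, Lp.coeFn_smul c f] with z h1 h2
    rw [h2, Pi.smul_apply, h1]; rfl

/-- The Bergman space `A²(Ω)`, the closed subspace of `L²(Ω)` of (a.e. equivalence
classes of) square-integrable holomorphic functions on `Ω`. -/
def A2 {n : ℕ} (Ω : Set (Cn n)) : Submodule ℂ (Lp ℂ 2 (restVol Ω)) :=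
  (holoSub Ω).topologicalClosure

instance A2.instCompleteSpace {n : ℕ} (Ω : Set (Cn n)) : CompleteSpace (A2 Ω) :=
  (Submodule.isClosed_topologicalClosure _).completeSpace_coe

/-- The Bergman projection, i.e. the orthogonal projection of `L²(Ω)` onto `A²(Ω)`. -/
def bergmanProj {n : ℕ} (Ω : Set (Cn n)) : Lp ℂ 2 (restVol Ω) →L[ℂ] A2 Ω :=
  (A2 Ω).orthogonalProjectionOnto

/-- `T` is the Toeplitz operator with symbol `φ` on `A²(Ω)`: `T f = P (φ f)`. -/
def IsToeplitz {n : ℕ} (Ω : Set (Cn n)) (φ : Cn n → ℂ) (T : A2 Ω →L[ℂ] A2 Ω) : Prop :=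
  ∀ f : A2 Ω, ∃ hm : MemLp (fun z => φ z * (f : Lp ℂ 2 (restVol Ω)) z) 2 (restVol Ω),
    T f = bergmanProj Ω (hm.toLp _)

/-- `H` is the Hankel operator with symbol `φ`: `H f = (I - P)(φ f)`. -/
def IsHankel {n : ℕ} (Ω : Set (Cn n)) (φ : Cn n → ℂ)
    (H : A2 Ω →L[ℂ] Lp ℂ 2 (restVol Ω)) : Prop :=
  ∀ f : A2 Ω, ∃ hm : MemLp (fun z => φ z * (f : Lp ℂ 2 (restVol Ω)) z) 2 (restVol Ω),
    H f = hm.toLp _ - (bergmanProj Ω (hm.toLp _) : Lp ℂ 2 (restVol Ω))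

/-- `Kf` is the Bergman kernel of `Ω`: for each `z ∈ Ω`, `Kf (·, z)` is a holomorphic
square-integrable function reproducing at `z` the values of all functions in `A²(Ω)`. -/
def IsBergmanKernel {n : ℕ} (Ω : Set (Cn n)) (Kf : Cn n → Cn n → ℂ) : Prop :=
  ∀ z ∈ Ω, DifferentiableOn ℂ (fun w => Kf w z) Ω ∧
    ∃ hm : MemLp (fun w => Kf w z) 2 (restVol Ω),
      ∀ (g : Cn n → ℂ) (hg : MemLp g 2 (restVol Ω)), DifferentiableOn ℂ g Ω →
        g z = (inner ℂ (hm.toLp _) (hg.toLp g) : ℂ)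

/-- The Bergman kernel is positive on the diagonal of `Ω` (automatic for bounded domains). -/
def KernelDiagPos {n : ℕ} (Ω : Set (Cn n)) (Kf : Cn n → Cn n → ℂ) : Prop :=
  ∀ z ∈ Ω, (Kf z z).im = 0 ∧ 0 < (Kf z z).re

/-- `k` is the family of normalized Bergman kernels `k_z = K(·,z)/√K(z,z)`, as elements
of `A²(Ω)`. -/
def IsNormalizedKernel {n : ℕ} (Ω : Set (Cn n)) (Kf : Cn n → Cn n → ℂ)
    (k : Cn n → A2 Ω) : Prop :=
  ∀ z ∈ Ω, ∀ᵐ w ∂(restVol Ω),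
    (k z : Lp ℂ 2 (restVol Ω)) w = Kf w z / (Real.sqrt ((Kf z z).re) : ℂ)

/-- The Berezin transform of a bounded operator `T` on `A²(Ω)`: `T̃(z) = ⟨T k_z, k_z⟩`
(in the mathematicians' convention; `inner` below is conjugate-linear in the first slot). -/
def berezinOp {n : ℕ} {Ω : Set (Cn n)} (k : Cn n → A2 Ω) (T : A2 Ω →L[ℂ] A2 Ω)
    (z : Cn n) : ℂ :=
  inner ℂ ((k z : Lp ℂ 2 (restVol Ω))) ((T (k z) : Lp ℂ 2 (restVol Ω)))

/-- `F(z) → 0` as `z → bΩ` (`z` ranging over `Ω`). -/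
def BoundaryVanish {X E : Type*} [TopologicalSpace X] [TopologicalSpace E] [Zero E]
    (Ω : Set X) (F : X → E) : Prop :=
  ∀ p ∈ frontier Ω, Tendsto F (nhdsWithin p Ω) (nhds 0)

/-- `ξ^J` for a multi-index `J ∈ ℤⁿ`. -/
def tpow {n : ℕ} (ξ : Cn n) (J : Fin n → ℤ) : ℂ := ∏ i, ξ i ^ J i

/-- The average of `g` over the unit torus `𝕋ⁿ` with respect to the normalized Haar
measure `σ` (`σ(𝕋ⁿ) = 1`). -/
def torusAvg (n : ℕ) (g : Cn n → ℂ) : ℂ :=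
  (((2 * Real.pi) ^ n)⁻¹ : ℝ) •
    ∫ θ in (Set.univ.pi fun _ : Fin n => Set.Ioc (0 : ℝ) (2 * Real.pi)),
      g (fun i => Complex.exp ((θ i : ℂ) * Complex.I))

/-- The `J`-th quasi-homogeneous component `f_J(z) = ∫_{𝕋ⁿ} f(ξ ⋄ z) ξ̄^J dσ(ξ)`. -/
def qhComp {n : ℕ} (J : Fin n → ℤ) (f : Cn n → ℂ) (z : Cn n) : ℂ :=
  torusAvg n (fun ξ => f (torusSMul ξ z) * (starRingEnd ℂ) (tpow ξ J))

/-- `φ` is quasi-homogeneous of multidegree `J`: `φ(ξ ⋄ z) = ξ^J φ(z)` for a.e. `z ∈ Ω`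
and every `ξ ∈ 𝕋ⁿ`. -/
def IsQuasiHomogeneous {n : ℕ} (Ω : Set (Cn n)) (J : Fin n → ℤ) (φ : Cn n → ℂ) : Prop :=
  ∀ ξ ∈ unitTorus n, ∀ᵐ z ∂(restVol Ω), φ (torusSMul ξ z) = tpow ξ J * φ z

/-- The shifted multi-index `α + J` (as an element of `ℕ₀ⁿ`). -/
def shiftIdx {n : ℕ} (J : Fin n → ℤ) (α : Fin n → ℕ) : Fin n → ℕ :=
  fun i => ((α i : ℤ) + J i).toNat

section TorusAction

variable {n : ℕ}

lemma ne_zero_of_mem_unitTorus {ξ : Cn n} (hξ : ξ ∈ unitTorus n) (i : Fin n) : ξ i ≠ 0 :=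
  norm_ne_zero_iff.mp (by rw [hξ i]; exact one_ne_zero)

lemma inv_mem_unitTorus {ξ : Cn n} (hξ : ξ ∈ unitTorus n) : (fun i => (ξ i)⁻¹) ∈ unitTorus n :=
  fun i => by simp [hξ i]

lemma torusSMul_inv_torusSMul {ξ : Cn n} (hξ : ξ ∈ unitTorus n) (z : Cn n) :
    torusSMul (fun i => (ξ i)⁻¹) (torusSMul ξ z) = z :=
  funext fun i => inv_mul_cancel_left₀ (ne_zero_of_mem_unitTorus hξ i) (z i)

lemma IsCompleteReinhardt.isReinhardt {Ω : Set (Cn n)} (hΩ : IsCompleteReinhardt Ω)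
    (hΩopen : IsOpen Ω) : IsReinhardt Ω := by
  intro z hz ξ hξ
  have hlim : Tendsto (fun r : ℝ => (r : ℂ) • z) (𝓝[>] 1) (𝓝 z) := by
    have : Continuous fun r : ℝ => (r : ℂ) • z := by fun_prop
    simpa using (this.tendsto 1).mono_left nhdsWithin_le_nhds
  obtain ⟨r, hrΩ, hr⟩ :=
    ((hlim.eventually (hΩopen.mem_nhds hz)).and self_mem_nhdsWithin).exists
  -- `ξ ⋄ z = (ξ / r) ⋄ (r z)` with `ξ / r` in the open polydisc
  convert hΩ _ hrΩ (fun i => ξ i / r) fun i => ?_ using 1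
  · funext i
    have hr0 : (r : ℂ) ≠ 0 := by exact_mod_cast (zero_lt_one.trans hr).ne'
    simp only [torusSMul, Pi.smul_apply, smul_eq_mul]
    field_simp
  · rw [norm_div, hξ i, Complex.norm_real, Real.norm_eq_abs,
      abs_of_pos (zero_lt_one.trans hr)]
    exact (div_lt_one (zero_lt_one.trans hr)).mpr hr

lemma IsReinhardt.preimage_torusSMul {Ω : Set (Cn n)} (hΩ : IsReinhardt Ω) {ξ : Cn n}
    (hξ : ξ ∈ unitTorus n) : torusSMul ξ ⁻¹' Ω = Ω := by
  refine Set.Subset.antisymm (fun z hz => ?_) fun z hz => hΩ z hz ξ hξ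
  simpa [torusSMul_inv_torusSMul hξ] using hΩ _ hz _ (inv_mem_unitTorus hξ)

lemma measurableEmbedding_torusSMul {ξ : Cn n} (hξ : ξ ∈ unitTorus n) :
    MeasurableEmbedding (torusSMul ξ) :=
  (Homeomorph.piCongrRight fun i =>
    Homeomorph.mulLeft₀ (ξ i) (ne_zero_of_mem_unitTorus hξ i)).measurableEmbedding

lemma measurePreserving_torusSMul {ξ : Cn n} (hξ : ξ ∈ unitTorus n) :
    MeasurePreserving (torusSMul ξ) volume volume :=
  volume_preserving_pi fun i =>
    (rotation ⟨ξ i, by simp [Submonoid.unitSphere, hξ i]⟩).measurePreserving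

lemma IsReinhardt.integral_comp_torusSMul {Ω : Set (Cn n)} (hΩ : IsReinhardt Ω)
    (hΩm : MeasurableSet Ω) {ξ : Cn n} (hξ : ξ ∈ unitTorus n) (F : Cn n → ℂ) :
    ∫ z, F (torusSMul ξ z) ∂restVol Ω = ∫ z, F z ∂restVol Ω := by
  have := (measurePreserving_torusSMul hξ).restrict_preimage hΩm
  rw [hΩ.preimage_torusSMul hξ] at this
  exact this.integral_comp (measurableEmbedding_torusSMul hξ) F

end TorusAction

section QuasiHomogeneous

variable {n : ℕ}

lemma tpow_add {ξ : Cn n} (hξ : ξ ∈ unitTorus n) (K L : Fin n → ℤ) :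
    tpow ξ (K + L) = tpow ξ K * tpow ξ L := by
  simp only [tpow, Pi.add_apply, ← Finset.prod_mul_distrib,
    zpow_add₀ (ne_zero_of_mem_unitTorus hξ _)]

lemma conj_tpow {ξ : Cn n} (hξ : ξ ∈ unitTorus n) (K : Fin n → ℤ) :
    starRingEnd ℂ (tpow ξ K) = tpow ξ (-K) := by
  simp only [tpow, map_prod, map_zpow₀, Pi.neg_apply, zpow_neg, ← inv_zpow]
  congr! 2 with i
  rw [Complex.inv_def, ← Complex.sq_norm, hξ i, one_pow, inv_one, Complex.ofReal_one, mul_one]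

lemma tpow_natCast (ξ : Cn n) (α : Fin n → ℕ) :
    tpow ξ (fun i => (α i : ℤ)) = ∏ i, ξ i ^ α i :=
  Finset.prod_congr rfl fun _ _ => zpow_natCast _ _

lemma exists_mem_unitTorus_tpow_eq_neg_one {K : Fin n → ℤ} (hK : K ≠ 0) :
    ∃ ξ ∈ unitTorus n, tpow ξ K = -1 := by
  classical
  obtain ⟨i₀, hi₀⟩ := Function.ne_iff.mp hK
  -- rotate the `i₀`-th coordinate by the angle `π / K i₀`
  refine ⟨Function.update 1 i₀ (Complex.exp ((Real.pi / K i₀ : ℝ) * Complex.I)),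
    fun i => ?_, ?_⟩
  · rcases eq_or_ne i i₀ with rfl | hi
    · rw [Function.update_self]
      exact Complex.norm_exp_ofReal_mul_I _
    · simp [hi]
  · rw [tpow, Finset.prod_eq_single i₀ (fun i _ hi => by simp [hi]) (by simp),
      Function.update_self, ← Complex.exp_int_mul, ← Complex.exp_pi_mul_I]
    congr 1
    push_cast
    field_simp [Int.cast_ne_zero.mpr hi₀]

variable {Ω : Set (Cn n)}

lemma IsQuasiHomogeneous.mul {K L : Fin n → ℤ} {F G : Cn n → ℂ}
    (hF : IsQuasiHomogeneous Ω K F) (hG : IsQuasiHomogeneous Ω L G) :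
    IsQuasiHomogeneous Ω (K + L) fun z => F z * G z := fun ξ hξ => by
  filter_upwards [hF ξ hξ, hG ξ hξ] with z hFz hGz
  rw [hFz, hGz, tpow_add hξ]
  ring

lemma IsQuasiHomogeneous.conj {K : Fin n → ℤ} {F : Cn n → ℂ}
    (hF : IsQuasiHomogeneous Ω K F) :
    IsQuasiHomogeneous Ω (-K) fun z => starRingEnd ℂ (F z) := fun ξ hξ => by
  filter_upwards [hF ξ hξ] with z hFz
  rw [hFz, map_mul, conj_tpow hξ]

lemma isQuasiHomogeneous_monomial (a : ℂ) (α : Fin n → ℕ) :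
    IsQuasiHomogeneous Ω (fun i => (α i : ℤ)) fun z => a * ∏ i, z i ^ α i :=
  fun ξ _ => ae_of_all _ fun z => by
    simp only [torusSMul, mul_pow, Finset.prod_mul_distrib, tpow_natCast]
    ring

/-- The integral is invariant under the torus action, which multiplies it by `ξ^K`; choosing
`ξ^K = -1` forces it to vanish. -/
lemma IsQuasiHomogeneous.integral_eq_zero (hΩ : IsReinhardt Ω) (hΩm : MeasurableSet Ω)
    {K : Fin n → ℤ} {F : Cn n → ℂ} (hF : IsQuasiHomogeneous Ω K F) (hK : K ≠ 0) :
    ∫ z, F z ∂restVol Ω = 0 := by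
  obtain ⟨ξ, hξ, hξK⟩ := exists_mem_unitTorus_tpow_eq_neg_one hK
  have : ∫ z, F z ∂restVol Ω = -∫ z, F z ∂restVol Ω :=
    calc ∫ z, F z ∂restVol Ω = ∫ z, F (torusSMul ξ z) ∂restVol Ω :=
          (hΩ.integral_comp_torusSMul hΩm hξ F).symm
      _ = ∫ z, tpow ξ K * F z ∂restVol Ω := integral_congr_ae (hF ξ hξ)
      _ = -∫ z, F z ∂restVol Ω := by rw [integral_const_mul, hξK, neg_one_mul]
  linear_combination this / 2

lemma inner_eq_zero_of_isQuasiHomogeneous (hΩ : IsReinhardt Ω) (hΩm : MeasurableSet Ω)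
    {v w : Lp ℂ 2 (restVol Ω)} {F G : Cn n → ℂ} {K L : Fin n → ℤ}
    (hv : v =ᵐ[restVol Ω] F) (hw : w =ᵐ[restVol Ω] G)
    (hF : IsQuasiHomogeneous Ω K F) (hG : IsQuasiHomogeneous Ω L G) (hKL : K ≠ L) :
    inner ℂ v w = 0 := by
  rw [L2.inner_def]
  refine (integral_congr_ae ?_).trans
    ((hF.conj.mul hG).integral_eq_zero hΩ hΩm (neg_add_eq_zero.not.mpr hKL))
  filter_upwards [hv, hw] with z hvz hwz
  rw [hvz, hwz, RCLike.inner_apply, mul_comm]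

lemma IsQuasiHomogeneous.inner_monomial_mul_monomial_eq_zero (hΩ : IsReinhardt Ω)
    (hΩm : MeasurableSet Ω) {J : Fin n → ℤ} {φ : Cn n → ℂ} (hφ : IsQuasiHomogeneous Ω J φ)
    {v w : Lp ℂ 2 (restVol Ω)} {a b : ℂ} {α β : Fin n → ℕ}
    (hv : v =ᵐ[restVol Ω] fun z => b * ∏ i, z i ^ β i)
    (hw : w =ᵐ[restVol Ω] fun z => φ z * (a * ∏ i, z i ^ α i))
    (h : (J + fun i => (α i : ℤ)) ≠ fun i => (β i : ℤ)) :
    inner ℂ v w = 0 :=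
  inner_eq_zero_of_isQuasiHomogeneous hΩ hΩm hv hw (isQuasiHomogeneous_monomial b β)
    (hφ.mul (isQuasiHomogeneous_monomial a α)) h.symm

lemma IsQuasiHomogeneous.inner_mul_monomial_eq_zero (hΩ : IsReinhardt Ω)
    (hΩm : MeasurableSet Ω) {J : Fin n → ℤ} {φ : Cn n → ℂ} (hφ : IsQuasiHomogeneous Ω J φ)
    {v w : Lp ℂ 2 (restVol Ω)} {a b : ℂ} {α β : Fin n → ℕ}
    (hv : v =ᵐ[restVol Ω] fun z => φ z * (b * ∏ i, z i ^ β i))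
    (hw : w =ᵐ[restVol Ω] fun z => φ z * (a * ∏ i, z i ^ α i)) (h : α ≠ β) :
    inner ℂ v w = 0 :=
  inner_eq_zero_of_isQuasiHomogeneous hΩ hΩm hv hw (hφ.mul (isQuasiHomogeneous_monomial b β))
    (hφ.mul (isQuasiHomogeneous_monomial a α))
    fun hJ => h (funext fun i => by simpa using (congrFun hJ i).symm)

end QuasiHomogeneous

section Phase

variable {n : ℕ}

/-- The phase factor `e^{iJ·θ}` of `z = (r₁e^{iθ₁}, …, rₙe^{iθₙ})`. -/
def argPhase (J : Fin n → ℤ) (z : Cn n) : ℂ :=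
  ∏ i, Complex.exp ((J i : ℂ) * (Complex.arg (z i) : ℂ) * Complex.I)

lemma norm_argPhase (J : Fin n → ℤ) (z : Cn n) : ‖argPhase J z‖ = 1 := by
  simp [argPhase, norm_prod, Complex.norm_exp]

lemma conj_pow_mul_exp_arg_mul_pow (z : ℂ) {a b : ℕ} {j : ℤ} (h : (a : ℤ) + j = b) :
    starRingEnd ℂ (z ^ b) * (Complex.exp ((j : ℂ) * (Complex.arg z : ℂ) * Complex.I) * z ^ a)
      = (‖z‖ : ℂ) ^ b * (‖z‖ : ℂ) ^ a := by
  rw [mul_assoc (j : ℂ)]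
  set θ : ℂ := (Complex.arg z : ℂ) * Complex.I
  have hpolar : z = ‖z‖ * Complex.exp θ := (Complex.norm_mul_exp_arg_mul_I z).symm
  have hconj : starRingEnd ℂ z = ‖z‖ * Complex.exp (-θ) := by
    conv_lhs => rw [hpolar]
    rw [map_mul, Complex.conj_ofReal, ← Complex.exp_conj, map_mul, Complex.conj_ofReal,
      Complex.conj_I, mul_neg]
  have hphase : Complex.exp (-θ) ^ b * (Complex.exp (j * θ) * Complex.exp θ ^ a) = 1 := by
    rw [← Complex.exp_nat_mul, ← Complex.exp_nat_mul, ← Complex.exp_add, ← Complex.exp_add,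
      ← Complex.exp_zero]
    congr 1
    have : (a : ℂ) + j = b := by exact_mod_cast h
    linear_combination θ * this
  have hza : z ^ a = (‖z‖ : ℂ) ^ a * Complex.exp θ ^ a := by rw [← mul_pow, ← hpolar]
  rw [map_pow, hconj, hza]
  linear_combination (‖z‖ : ℂ) ^ b * (‖z‖ : ℂ) ^ a * hphase

lemma conj_prod_pow_mul_argPhase_mul_prod_pow (z : Cn n) {α γ : Fin n → ℕ} {J : Fin n → ℤ}
    (h : ∀ i, (α i : ℤ) + J i = γ i) :
    starRingEnd ℂ (∏ i, z i ^ γ i) * (argPhase J z * ∏ i, z i ^ α i)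
      = (((∏ i, ‖z i‖ ^ γ i) * ∏ i, ‖z i‖ ^ α i : ℝ) : ℂ) := by
  rw [Complex.ofReal_mul, Complex.ofReal_prod, Complex.ofReal_prod]
  simp only [argPhase, map_prod, Complex.ofReal_pow, ← Finset.prod_mul_distrib]
  exact Finset.prod_congr rfl fun i _ => conj_pow_mul_exp_arg_mul_pow (z i) (h i)

end Phase

section L2Integrals

variable {n : ℕ} {Ω : Set (Cn n)} {J : Fin n → ℤ} {φ ϕ : Cn n → ℂ}
  {v w : Lp ℂ 2 (restVol Ω)}

lemma inner_self_eq_integral_of_ae_eq (hdecomp : ∀ᵐ z ∂restVol Ω, φ z = ϕ z * argPhase J z)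
    {c : ℝ} (hc : 0 ≤ c) {α : Fin n → ℕ}
    (hv : v =ᵐ[restVol Ω] fun z => φ z * (c * ∏ i, z i ^ α i)) :
    inner ℂ v v = ((∫ z in Ω, ‖ϕ z‖ ^ 2 * (c * ∏ i, ‖z i‖ ^ α i) ^ 2 : ℝ) : ℂ) := by
  rw [L2.inner_def, ← integral_complex_ofReal]
  refine integral_congr_ae ?_
  filter_upwards [hv, hdecomp] with z hvz hφz
  rw [RCLike.inner_apply, mul_comm, Complex.conj_mul', hvz, hφz, norm_mul, norm_mul,
    norm_argPhase, norm_mul, norm_prod, Complex.norm_real, Real.norm_of_nonneg hc]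
  simp only [norm_pow]
  push_cast
  ring

lemma inner_eq_integral_of_ae_eq (hdecomp : ∀ᵐ z ∂restVol Ω, φ z = ϕ z * argPhase J z)
    {cα cγ : ℝ} {α γ : Fin n → ℕ} (hγ : ∀ i, (α i : ℤ) + J i = γ i)
    (hw : w =ᵐ[restVol Ω] fun z => cγ * ∏ i, z i ^ γ i)
    (hv : v =ᵐ[restVol Ω] fun z => φ z * (cα * ∏ i, z i ^ α i)) :
    inner ℂ w v = ∫ z in Ω, ϕ z *
      (((cα * ∏ i, ‖z i‖ ^ α i) * (cγ * ∏ i, ‖z i‖ ^ γ i) : ℝ) : ℂ) := by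
  rw [L2.inner_def]
  refine integral_congr_ae ?_
  filter_upwards [hv, hw, hdecomp] with z hvz hwz hφz
  have := conj_prod_pow_mul_argPhase_mul_prod_pow z hγ
  rw [RCLike.inner_apply, mul_comm, hvz, hwz, hφz, map_mul, Complex.conj_ofReal]
  push_cast at this ⊢
  linear_combination (cγ : ℂ) * cα * ϕ z * this

end L2Integrals

section HilbertSpace

variable {𝕜 E F ι : Type*} [RCLike 𝕜] [NormedAddCommGroup E] [InnerProductSpace 𝕜 E]
  {K : Submodule 𝕜 E} [K.HasOrthogonalProjection]

lemma Submodule.starProjection_eq_inner_smul_of_forall_ne (b : HilbertBasis ι 𝕜 K) {v : E}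
    {i : ι} (h : ∀ j ≠ i, inner 𝕜 (b j : E) v = 0) :
    K.starProjection v = inner 𝕜 (b i : E) v • (b i : E) := by
  have hsum := b.hasSum_repr (K.orthogonalProjectionOnto v)
  simp only [b.repr_apply_apply, inner_orthogonalProjectionOnto_eq_of_mem_left] at hsum
  rw [K.starProjection_apply, hsum.unique (hasSum_single i fun j hj => by rw [h j hj, zero_smul]),
    Submodule.coe_smul]

lemma inner_adjoint_apply_of_eq_sub_starProjection [NormedAddCommGroup F]
    [InnerProductSpace 𝕜 F] [CompleteSpace E] [CompleteSpace F] (H : F →L[𝕜] E) (u : F → E)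
    (hH : ∀ f, H f = u f - K.starProjection (u f)) (f g : F) :
    inner 𝕜 f (H.adjoint (H g)) =
      inner 𝕜 (u f) (u g) - inner 𝕜 (K.starProjection (u f)) (K.starProjection (u g)) := by
  have hperp : ∀ x y : E, inner 𝕜 (x - K.starProjection x) (K.starProjection y) = 0 :=
    fun x y => K.starProjection_inner_eq_zero x _ (K.starProjection_apply_mem y)
  have hPu : inner 𝕜 (K.starProjection (u f)) (u g) =
      inner 𝕜 (K.starProjection (u f)) (K.starProjection (u g)) := by
    rw [← sub_eq_zero, ← inner_sub_right]
    exact inner_eq_zero_symm.mp (hperp _ _)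
  rw [ContinuousLinearMap.adjoint_inner_right, hH, hH, inner_sub_right, hperp, sub_zero,
    inner_sub_left, hPu]

/-- `hσ` says that `u (b i) ∈ span {b (σ i)} ⊕ Kᗮ`, so the projection of `u (b i)` onto `K` is a
multiple of `b (σ i)`. -/
lemma HilbertBasis.inner_adjoint_apply_eq_of_forall_ne [CompleteSpace E]
    [CompleteSpace K] (b : HilbertBasis ι 𝕜 K) (σ : ι → ι) (H : K →L[𝕜] E) (u : K → E)
    (hH : ∀ f, H f = u f - K.starProjection (u f))
    (hσ : ∀ i, ∀ j ≠ σ i, inner 𝕜 (b j : E) (u (b i)) = 0) (i j : ι) :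
    inner 𝕜 (b j) (H.adjoint (H (b i))) = inner 𝕜 (u (b j)) (u (b i)) -
      starRingEnd 𝕜 (inner 𝕜 (b (σ j) : E) (u (b j))) * inner 𝕜 (b (σ i) : E) (u (b i)) *
        inner 𝕜 (b (σ j)) (b (σ i)) := by
  rw [inner_adjoint_apply_of_eq_sub_starProjection H u hH,
    K.starProjection_eq_inner_smul_of_forall_ne b (hσ i),
    K.starProjection_eq_inner_smul_of_forall_ne b (hσ j), inner_smul_left, inner_smul_right,
    Submodule.coe_inner]
  ring

end HilbertSpace

section ShiftIdx

variable {n : ℕ} {J : Fin n → ℤ} {α β : Fin n → ℕ}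

lemma add_natCast_eq_natCast_iff_shiftIdx :
    (J + fun i => (α i : ℤ)) = (fun i => (β i : ℤ)) ↔
      β = shiftIdx J α ∧ ∀ i, 0 ≤ (α i : ℤ) + J i := by
  simp only [funext_iff, Pi.add_apply, shiftIdx, ← forall_and]
  exact forall_congr' fun i => by omega

lemma natCast_shiftIdx (hα : ∀ i, 0 ≤ (α i : ℤ) + J i) (i : Fin n) :
    (shiftIdx J α i : ℤ) = α i + J i :=
  Int.toNat_of_nonneg (hα i)

lemma not_forall_nonneg_or_of_shiftIdx_eq (h : shiftIdx J α = shiftIdx J β) (hne : α ≠ β) :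
    (¬ ∀ i, 0 ≤ (α i : ℤ) + J i) ∨ ¬ ∀ i, 0 ≤ (β i : ℤ) + J i := by
  by_contra! ⟨hα, hβ⟩
  refine hne (funext fun i => ?_)
  have := congrFun h i
  have := natCast_shiftIdx hα i
  have := natCast_shiftIdx hβ i
  omega

end ShiftIdx

lemma IsHankel.exists_eq_sub_starProjection {n : ℕ} {Ω : Set (Cn n)} {φ : Cn n → ℂ}
    {H : A2 Ω →L[ℂ] Lp ℂ 2 (restVol Ω)} (hH : IsHankel Ω φ H) :
    ∃ u : A2 Ω → Lp ℂ 2 (restVol Ω),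
      (∀ f, u f =ᵐ[restVol Ω] fun z => φ z * (f : Lp ℂ 2 (restVol Ω)) z) ∧
      ∀ f, H f = u f - (A2 Ω).starProjection (u f) := by
  choose hmem hH using hH
  refine ⟨fun f => (hmem f).toLp _, fun f => (hmem f).coeFn_toLp, fun f => ?_⟩
  rw [hH f, Submodule.starProjection_apply]
  rfl

theorem hankel_square_quasiHomogeneous_diagonal_general
    {n : ℕ} (Ω : Set (Cn n)) (hΩopen : IsOpen Ω)
    (hΩcRein : IsCompleteReinhardt Ω)
    (J : Fin n → ℤ) (φ ϕ : Cn n → ℂ)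
    (hφqh : IsQuasiHomogeneous Ω J φ)
    (hdecomp : ∀ᵐ z ∂(restVol Ω),
      φ z = ϕ z * ∏ i, Complex.exp ((J i : ℂ) * (Complex.arg (z i) : ℂ) * Complex.I))
    -- the normalized monomials `e_α = z^α/‖z^α‖`, an orthonormal basis of `A²(Ω)`
    (e : (Fin n → ℕ) → A2 Ω) (c : (Fin n → ℕ) → ℝ)
    (he : ∀ α, 0 < c α ∧ ‖(e α : Lp ℂ 2 (restVol Ω))‖ = 1 ∧
      ∀ᵐ z ∂(restVol Ω), (e α : Lp ℂ 2 (restVol Ω)) z = (c α : ℂ) * ∏ i, z i ^ α i)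
    (hON : Orthonormal ℂ e)
    (hdense : (Submodule.span ℂ (Set.range e)).topologicalClosure = ⊤)
    (H : A2 Ω →L[ℂ] Lp ℂ 2 (restVol Ω)) (hH : IsHankel Ω φ H) :
    (∀ α β : Fin n → ℕ, α ≠ β →
      (inner ℂ ((e β : Lp ℂ 2 (restVol Ω)))
        (((ContinuousLinearMap.adjoint H) (H (e α)) : Lp ℂ 2 (restVol Ω))) : ℂ) = 0)
    ∧ (∀ α : Fin n → ℕ, ¬ (∀ i, 0 ≤ (α i : ℤ) + J i) →
        (inner ℂ ((e α : Lp ℂ 2 (restVol Ω)))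
          (((ContinuousLinearMap.adjoint H) (H (e α)) : Lp ℂ 2 (restVol Ω))) : ℂ)
          = Complex.ofReal (∫ z in Ω,
              ‖ϕ z‖ ^ 2 * (c α * ∏ i, ‖z i‖ ^ α i) ^ 2))
    ∧ (∀ α : Fin n → ℕ, (∀ i, 0 ≤ (α i : ℤ) + J i) →
        (inner ℂ ((e α : Lp ℂ 2 (restVol Ω)))
          (((ContinuousLinearMap.adjoint H) (H (e α)) : Lp ℂ 2 (restVol Ω))) : ℂ)
          = Complex.ofReal (∫ z in Ω,
              ‖ϕ z‖ ^ 2 * (c α * ∏ i, ‖z i‖ ^ α i) ^ 2)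
            - Complex.ofReal (‖∫ z in Ω, ϕ z * Complex.ofReal
                ((c α * ∏ i, ‖z i‖ ^ α i) *
                 (c (shiftIdx J α) * ∏ i, ‖z i‖ ^ shiftIdx J α i))‖ ^ 2)) := by
  obtain ⟨u, hu, hH'⟩ := hH.exists_eq_sub_starProjection
  have hue (α) : u (e α) =ᵐ[restVol Ω] fun z => φ z * (c α * ∏ i, z i ^ α i) := by
    filter_upwards [hu (e α), (he α).2.2] with z hz hez
    rw [hz, hez]
  have hΩ := hΩcRein.isReinhardt hΩopen
  have hcoeff (α β) (h : (J + fun i => (α i : ℤ)) ≠ fun i => (β i : ℤ)) :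
      inner ℂ (e β : Lp ℂ 2 (restVol Ω)) (u (e α)) = 0 :=
    hφqh.inner_monomial_mul_monomial_eq_zero hΩ hΩopen.measurableSet (he β).2.2 (hue α) h
  have hHH := (HilbertBasis.mk hON hdense.ge).inner_adjoint_apply_eq_of_forall_ne
    (shiftIdx J) H u hH' fun α β hβ =>
      by simpa using hcoeff α β fun h => hβ (add_natCast_eq_natCast_iff_shiftIdx.mp h).1
  simp only [HilbertBasis.coe_mk, Submodule.coe_inner, orthonormal_iff_ite.mp hON] at hHH
  have ha (α) (hα : ¬ ∀ i, 0 ≤ (α i : ℤ) + J i) :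
      inner ℂ (e (shiftIdx J α) : Lp ℂ 2 (restVol Ω)) (u (e α)) = 0 :=
    hcoeff α _ fun h => hα (add_natCast_eq_natCast_iff_shiftIdx.mp h).2
  refine ⟨fun α β hαβ => ?_, fun α hα => ?_, fun α hα => ?_⟩
  · rw [hHH, hφqh.inner_mul_monomial_eq_zero hΩ hΩopen.measurableSet (hue β) (hue α) hαβ]
    split_ifs with hσ
    · rcases not_forall_nonneg_or_of_shiftIdx_eq hσ.symm hαβ with hA | hB
      · simp [ha α hA]
      · simp [ha β hB]
    · simp
  · rw [hHH, ha α hα, inner_self_eq_integral_of_ae_eq hdecomp (he α).1.le (hue α)]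
    simp
  · rw [hHH, inner_self_eq_integral_of_ae_eq hdecomp (he α).1.le (hue α), if_pos rfl, mul_one,
      Complex.conj_mul', inner_eq_integral_of_ae_eq hdecomp
        (fun i => (natCast_shiftIdx hα i).symm) (he _).2.2 (hue α), Complex.ofReal_pow]

/-- Let `Ω ⊆ ℂⁿ` be a bounded complete Reinhardt domain and
`φ = ϕ e^{iJ·θ} ∈ L^∞(Ω)` quasi-homogeneous of multidegree `J` with `ϕ` multi-radial.
Then `H*_φ H_φ` is diagonal w.r.t. `{e_α}`, with diagonal entries `λ''_α` when
`α + J ∉ ℕ₀ⁿ` and `λ''_α - |λ'_α|²` when `α + J ∈ ℕ₀ⁿ`, where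
`λ''_α = ∫_Ω |ϕ|² |e_α|² dV` and `λ'_α = ∫_Ω ϕ |e_α| |e_{α+J}| dV`. -/
theorem hankel_square_quasiHomogeneous_diagonal
    {n : ℕ} (Ω : Set (Cn n)) (hΩopen : IsOpen Ω) (hΩconn : IsConnected Ω)
    (hΩbd : Bornology.IsBounded Ω) (hΩcRein : IsCompleteReinhardt Ω)
    (J : Fin n → ℤ) (φ ϕ : Cn n → ℂ) (hφ : MemLp φ ⊤ (restVol Ω))
    (hφqh : IsQuasiHomogeneous Ω J φ)
    (hmr : ∀ z w : Cn n, (∀ i, ‖z i‖ = ‖w i‖) → ϕ z = ϕ w)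
    (hdecomp : ∀ᵐ z ∂(restVol Ω),
      φ z = ϕ z * ∏ i, Complex.exp ((J i : ℂ) * (Complex.arg (z i) : ℂ) * Complex.I))
    -- the normalized monomials `e_α = z^α/‖z^α‖`, an orthonormal basis of `A²(Ω)`
    (e : (Fin n → ℕ) → A2 Ω) (c : (Fin n → ℕ) → ℝ)
    (he : ∀ α, 0 < c α ∧ ‖(e α : Lp ℂ 2 (restVol Ω))‖ = 1 ∧
      ∀ᵐ z ∂(restVol Ω), (e α : Lp ℂ 2 (restVol Ω)) z = (c α : ℂ) * ∏ i, z i ^ α i)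
    (hON : Orthonormal ℂ e)
    (hdense : (Submodule.span ℂ (Set.range e)).topologicalClosure = ⊤)
    (H : A2 Ω →L[ℂ] Lp ℂ 2 (restVol Ω)) (hH : IsHankel Ω φ H) :
    (∀ α β : Fin n → ℕ, α ≠ β →
      (inner ℂ ((e β : Lp ℂ 2 (restVol Ω)))
        (((ContinuousLinearMap.adjoint H) (H (e α)) : Lp ℂ 2 (restVol Ω))) : ℂ) = 0)
    ∧ (∀ α : Fin n → ℕ, ¬ (∀ i, 0 ≤ (α i : ℤ) + J i) →
        (inner ℂ ((e α : Lp ℂ 2 (restVol Ω)))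
          (((ContinuousLinearMap.adjoint H) (H (e α)) : Lp ℂ 2 (restVol Ω))) : ℂ)
          = Complex.ofReal (∫ z in Ω,
              ‖ϕ z‖ ^ 2 * (c α * ∏ i, ‖z i‖ ^ α i) ^ 2))
    ∧ (∀ α : Fin n → ℕ, (∀ i, 0 ≤ (α i : ℤ) + J i) →
        (inner ℂ ((e α : Lp ℂ 2 (restVol Ω)))
          (((ContinuousLinearMap.adjoint H) (H (e α)) : Lp ℂ 2 (restVol Ω))) : ℂ)
          = Complex.ofReal (∫ z in Ω,
              ‖ϕ z‖ ^ 2 * (c α * ∏ i, ‖z i‖ ^ α i) ^ 2)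
            - Complex.ofReal (‖∫ z in Ω, ϕ z * Complex.ofReal
                ((c α * ∏ i, ‖z i‖ ^ α i) *
                 (c (shiftIdx J α) * ∏ i, ‖z i‖ ^ shiftIdx J α i))‖ ^ 2)) :=
  hankel_square_quasiHomogeneous_diagonal_general Ω hΩopen hΩcRein J φ ϕ hφqh hdecomp e c he hON
    hdense H hH

end
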